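/- Let n ∈ ℕ, with 1-digit blocks [a_i, b_i] as above (ε_j(n)=1 iff a_i ≤ j ≤ b_i for some i, and b_i+1 < a_{i+1}). Define H_n^{(1)}(t) = w_n(t) Σ_{j=2}^{|n|} ε_j(n)(D_{2^{j+1}}(t) − D_{2^j}(t)) l_{n(j-1)}. Then for every k and every t ∈ B_k := (2^{-(b_k+2)}, 2^{-(b_k+1)}), one has |H_n^{(1)}(t)| = Σ_{i=1}^{k} Σ_{j=a_i}^{b_i} 2^j l_{n(j-1)} ≥ 2^{b_k} l_{n(b_k-1)}. -/

import Mathlib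

open MeasureTheory Finset Filter Set

noncomputable section

/-- `k`-th binary digit of `x ∈ [0,1)`. -/
def xdigit (k : ℕ) (x : ℝ) : ℕ := ⌊x * 2 ^ (k + 1)⌋.toNat % 2

/-- Rademacher function `ρ_k(x) = (-1)^{x_k}`. -/
def rademacher (k : ℕ) (x : ℝ) : ℝ := (-1 : ℝ) ^ xdigit k x

/-- `j`-th binary digit of the natural number `n`. -/
def eps (j n : ℕ) : ℕ := n / 2 ^ j % 2

/-- Walsh-Paley function `w_n(x) = ∏_k ρ_k(x)^{n_k}`. -/
def walsh (n : ℕ) (x : ℝ) : ℝ := ∏ k ∈ Finset.range (n + 1), rademacher k x ^ eps k n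

/-- Walsh-Dirichlet kernel `D_n(x) = ∑_{m<n} w_m(x)`. -/
def Dker (n : ℕ) (x : ℝ) : ℝ := ∑ m ∈ Finset.range n, walsh m x

/-- `l_m = ∑_{k=1}^{m-1} 1/k`. -/
def lsum (m : ℕ) : ℝ := ∑ k ∈ Finset.Ico 1 m, (1 : ℝ) / k

/-- Logarithmic variation `V_L(n)`; note `n(k-1) = n % 2^k`. -/
def VL (n : ℕ) : ℝ :=
  (1 / (Nat.log 2 n : ℝ)) *
    ∑ k ∈ Finset.Icc 1 (Nat.log 2 n),
      |(eps k n : ℝ) - (eps (k + 1) n : ℝ)| * lsum (n % 2 ^ k)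

/-! On `B_k` the digits `0, …, b_k` of `t` (in the indexing of `xdigit`) vanish and digit
`b_k + 1` is `1`. Since `D_{2^m} = ∏_{i<m} (1 + ρ_i)`, the difference `D_{2^{j+1}}(t) - D_{2^j}(t)`
is `2^j` for `j ≤ b_k` and `0` for `j ≥ b_k + 2`. The gap `b_k + 1 < a_{k+1}` leaves no digit of
`n` at `b_k + 1`, so the surviving terms are exactly those of the blocks `1, …, k`; they are
nonnegative and `|w_n| = 1`. -/

lemma eps_eq_zero_of_lt {j n : ℕ} (h : n < 2 ^ j) : eps j n = 0 := by
  simp [eps, Nat.div_eq_of_lt h]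

lemma le_log_of_eps_eq_one {j n : ℕ} (h : eps j n = 1) : j ≤ Nat.log 2 n := by
  by_contra! hlt
  have : n < 2 ^ j :=
    (Nat.lt_pow_succ_log_self one_lt_two n).trans_le (Nat.pow_le_pow_right two_pos hlt)
  simp [eps_eq_zero_of_lt this] at h

lemma eps_two_pow_add_of_lt {j m r : ℕ} (hj : j < m) : eps j (2 ^ m + r) = eps j r := by
  obtain ⟨c, rfl⟩ := Nat.exists_eq_add_of_lt hj
  have : 2 ^ (j + c + 1) + r = 2 ^ j * (2 * 2 ^ c) + r := by ring
  rw [eps, eps, this, Nat.mul_add_div (pow_pos two_pos j)]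
  omega

lemma eps_two_pow_add_self {m r : ℕ} (hr : r < 2 ^ m) : eps m (2 ^ m + r) = 1 := by
  rw [eps, Nat.add_div_left _ (pow_pos two_pos m), Nat.div_eq_of_lt hr]

lemma walsh_eq_prod_range {n M : ℕ} (h : n < 2 ^ M) (x : ℝ) :
    walsh n x = ∏ k ∈ range M, rademacher k x ^ eps k n := by
  have vanish : ∀ k, n < 2 ^ k → rademacher k x ^ eps k n = 1 := fun k hk => by
    rw [eps_eq_zero_of_lt hk, pow_zero]
  rcases le_total (n + 1) M with hM | hM
  · exact prod_subset (range_subset_range.2 hM) fun k _ hk =>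
      vanish k <| Nat.lt_two_pow_self.trans_le <|
        Nat.pow_le_pow_right two_pos (by simp at hk; omega)
  · exact (prod_subset (range_subset_range.2 hM) fun k _ hk =>
      vanish k <| h.trans_le <| Nat.pow_le_pow_right two_pos (by simpa using hk)).symm

lemma walsh_two_pow_add {m r : ℕ} (hr : r < 2 ^ m) (x : ℝ) :
    walsh (2 ^ m + r) x = rademacher m x * walsh r x := by
  rw [walsh_eq_prod_range (show 2 ^ m + r < 2 ^ (m + 1) by omega) x, walsh_eq_prod_range hr x,
    prod_range_succ, eps_two_pow_add_self hr, pow_one, mul_comm]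
  congr 1
  exact prod_congr rfl fun k hk => by rw [eps_two_pow_add_of_lt (mem_range.mp hk)]

lemma abs_walsh (n : ℕ) (x : ℝ) : |walsh n x| = 1 := by
  simp [walsh, abs_prod, rademacher]

lemma Dker_two_pow (m : ℕ) (x : ℝ) :
    Dker (2 ^ m) x = ∏ k ∈ range m, (1 + rademacher k x) := by
  induction m with
  | zero => simp [Dker, walsh, eps]
  | succ m ih =>
    rw [prod_range_succ, ← ih, Dker, pow_succ, mul_two, sum_range_add,
      sum_congr rfl fun r hr => walsh_two_pow_add (mem_range.mp hr) x, ← mul_sum, Dker]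
    ring

lemma xdigit_eq_zero {k : ℕ} {x : ℝ} (hx : x ∈ Set.Ico 0 ((2 : ℝ) ^ (k + 1))⁻¹) :
    xdigit k x = 0 := by
  have hlt : x * 2 ^ (k + 1) < 1 := by rw [← lt_div_iff₀ (by positivity), one_div]; exact hx.2
  have : ⌊x * 2 ^ (k + 1)⌋ = 0 :=
    Int.floor_eq_zero_iff.mpr ⟨mul_nonneg hx.1 (by positivity), hlt⟩
  simp [xdigit, this]

lemma xdigit_eq_one {k : ℕ} {x : ℝ} (hx : x ∈ Set.Ico ((2 : ℝ) ^ (k + 1))⁻¹ ((2 : ℝ) ^ k)⁻¹) :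
    xdigit k x = 1 := by
  have hle : 1 ≤ x * 2 ^ (k + 1) := by rw [← div_le_iff₀ (by positivity), one_div]; exact hx.1
  have hlt : x * 2 ^ (k + 1) < 2 := by
    rw [pow_succ, ← mul_assoc, ← lt_div_iff₀ two_pos, div_self two_ne_zero,
      ← lt_div_iff₀ (by positivity), one_div]
    exact hx.2
  have : ⌊x * 2 ^ (k + 1)⌋ = 1 := Int.floor_eq_iff.mpr ⟨by simpa using hle, by norm_num [hlt]⟩
  simp [xdigit, this]

lemma Dker_two_pow_of_lt {m : ℕ} {x : ℝ} (hx : x ∈ Set.Ico 0 ((2 : ℝ) ^ m)⁻¹) :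
    Dker (2 ^ m) x = 2 ^ m := by
  rw [Dker_two_pow, prod_eq_pow_card (b := (2 : ℝ)) fun k hk => ?_, card_range]
  have hle : ((2 : ℝ) ^ m)⁻¹ ≤ ((2 : ℝ) ^ (k + 1))⁻¹ :=
    inv_anti₀ (by positivity) (pow_le_pow_right₀ one_le_two (mem_range.mp hk))
  rw [rademacher, xdigit_eq_zero ⟨hx.1, hx.2.trans_le hle⟩]
  norm_num

lemma Dker_two_pow_eq_zero {m k : ℕ} {x : ℝ} (hk : k < m) (hx : xdigit k x = 1) :
    Dker (2 ^ m) x = 0 := by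
  rw [Dker_two_pow]
  exact prod_eq_zero (mem_range.mpr hk) (by simp [rademacher, hx])

lemma Dker_two_pow_succ_sub_of_lt {j : ℕ} {x : ℝ} (hx : x ∈ Set.Ico 0 ((2 : ℝ) ^ (j + 1))⁻¹) :
    Dker (2 ^ (j + 1)) x - Dker (2 ^ j) x = 2 ^ j := by
  have hle : ((2 : ℝ) ^ (j + 1))⁻¹ ≤ ((2 : ℝ) ^ j)⁻¹ :=
    inv_anti₀ (by positivity) (pow_le_pow_right₀ one_le_two j.le_succ)
  rw [Dker_two_pow_of_lt hx, Dker_two_pow_of_lt ⟨hx.1, hx.2.trans_le hle⟩, pow_succ]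
  ring

lemma Dker_two_pow_succ_sub_eq_zero {j k : ℕ} {x : ℝ} (hk : k < j) (hx : xdigit k x = 1) :
    Dker (2 ^ (j + 1)) x - Dker (2 ^ j) x = 0 := by
  rw [Dker_two_pow_eq_zero (hk.trans j.lt_succ_self) hx, Dker_two_pow_eq_zero hk hx, sub_zero]

def blockUnion (a b : ℕ → ℕ) (k : ℕ) : Finset ℕ :=
  (Finset.Icc 1 k).biUnion fun i => Finset.Icc (a i) (b i)

section Blocks

variable {s : ℕ} {a b : ℕ → ℕ}

lemma block_end_add_one_lt (hab : ∀ i ∈ Finset.Icc 1 s, a i ≤ b i)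
    (hba : ∀ i ∈ Finset.Icc 1 (s - 1), b i + 1 < a (i + 1)) {i i' : ℕ} (hi : 1 ≤ i)
    (hii' : i < i') (hi' : i' ≤ s) : b i + 1 < a i' := by
  induction i', hii' using Nat.le_induction with
  | base => exact hba i (Finset.mem_Icc.mpr ⟨hi, by omega⟩)
  | succ m _ ih =>
    have := hab m (Finset.mem_Icc.mpr ⟨by omega, by omega⟩)
    have := hba m (Finset.mem_Icc.mpr ⟨by omega, by omega⟩)
    omega

lemma two_le_block_start (hab : ∀ i ∈ Finset.Icc 1 s, a i ≤ b i) (ha2 : 2 ≤ a 1)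
    (hba : ∀ i ∈ Finset.Icc 1 (s - 1), b i + 1 < a (i + 1)) {i : ℕ} (hi : i ∈ Finset.Icc 1 s) :
    2 ≤ a i := by
  obtain ⟨hi1, his⟩ := Finset.mem_Icc.mp hi
  rcases hi1.eq_or_lt with rfl | hlt
  · exact ha2
  · have := block_end_add_one_lt hab hba le_rfl hlt his
    have := hab 1 (Finset.mem_Icc.mpr ⟨le_rfl, by omega⟩)
    omega

lemma sum_blockUnion (hab : ∀ i ∈ Finset.Icc 1 s, a i ≤ b i)
    (hba : ∀ i ∈ Finset.Icc 1 (s - 1), b i + 1 < a (i + 1)) {k : ℕ} (hks : k ≤ s) (f : ℕ → ℝ) :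
    ∑ j ∈ blockUnion a b k, f j = ∑ i ∈ Finset.Icc 1 k, ∑ j ∈ Finset.Icc (a i) (b i), f j := by
  refine sum_biUnion fun i hi i' hi' hne => disjoint_left.mpr fun j hj hj' => ?_
  simp only [Finset.coe_Icc, Set.mem_Icc, Finset.mem_Icc] at hi hi' hj hj'
  rcases hne.lt_or_gt with h | h
  · have := block_end_add_one_lt hab hba hi.1 h (by omega); omega
  · have := block_end_add_one_lt hab hba hi'.1 h (by omega); omega

lemma le_of_mem_blockUnion (hab : ∀ i ∈ Finset.Icc 1 s, a i ≤ b i)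
    (hba : ∀ i ∈ Finset.Icc 1 (s - 1), b i + 1 < a (i + 1)) {k j : ℕ} (hks : k ≤ s)
    (hj : j ∈ blockUnion a b k) : j ≤ b k := by
  obtain ⟨i, hi, hji⟩ := mem_biUnion.mp hj
  simp only [Finset.mem_Icc] at hi hji
  rcases hi.2.eq_or_lt with rfl | hlt
  · exact hji.2
  · have := block_end_add_one_lt hab hba hi.1 hlt hks
    have := hab k (Finset.mem_Icc.mpr ⟨by omega, hks⟩)
    omega

lemma eps_eq_one_of_mem_blockUnion {n : ℕ} (hab : ∀ i ∈ Finset.Icc 1 s, a i ≤ b i)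
    (ha2 : 2 ≤ a 1) (hba : ∀ i ∈ Finset.Icc 1 (s - 1), b i + 1 < a (i + 1))
    (hdig : ∀ j : ℕ, 2 ≤ j → (eps j n = 1 ↔ ∃ i ∈ Finset.Icc 1 s, a i ≤ j ∧ j ≤ b i))
    {k j : ℕ} (hks : k ≤ s) (hj : j ∈ blockUnion a b k) : 2 ≤ j ∧ eps j n = 1 := by
  obtain ⟨i, hi, hji⟩ := mem_biUnion.mp hj
  simp only [Finset.mem_Icc] at hi hji
  have his : i ∈ Finset.Icc 1 s := Finset.mem_Icc.mpr ⟨hi.1, hi.2.trans hks⟩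
  have h2j := (two_le_block_start hab ha2 hba his).trans hji.1
  exact ⟨h2j, (hdig j h2j).mpr ⟨i, his, hji⟩⟩

lemma block_end_add_two_le {n : ℕ} (hab : ∀ i ∈ Finset.Icc 1 s, a i ≤ b i)
    (hba : ∀ i ∈ Finset.Icc 1 (s - 1), b i + 1 < a (i + 1))
    (hdig : ∀ j : ℕ, 2 ≤ j → (eps j n = 1 ↔ ∃ i ∈ Finset.Icc 1 s, a i ≤ j ∧ j ≤ b i))
    {k j : ℕ} (hk : 1 ≤ k) (h2j : 2 ≤ j) (hj : eps j n = 1) (hjk : j ∉ blockUnion a b k) :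
    b k + 2 ≤ j := by
  obtain ⟨i, hi, hji⟩ := (hdig j h2j).mp hj
  rw [Finset.mem_Icc] at hi
  have hki : k < i := by
    by_contra! hik
    exact hjk (mem_biUnion.mpr ⟨i, Finset.mem_Icc.mpr ⟨hi.1, hik⟩, Finset.mem_Icc.mpr hji⟩)
  have := block_end_add_one_lt hab hba hk hki hi.2
  omega

lemma sum_eps_mul_Dker_sub_eq_sum_blockUnion {n : ℕ} (hab : ∀ i ∈ Finset.Icc 1 s, a i ≤ b i)
    (ha2 : 2 ≤ a 1) (hba : ∀ i ∈ Finset.Icc 1 (s - 1), b i + 1 < a (i + 1))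
    (hdig : ∀ j : ℕ, 2 ≤ j → (eps j n = 1 ↔ ∃ i ∈ Finset.Icc 1 s, a i ≤ j ∧ j ≤ b i))
    {k : ℕ} (hk : k ∈ Finset.Icc 1 s) (c : ℕ → ℝ) {t : ℝ}
    (ht : t ∈ Set.Ioo ((2 : ℝ) ^ (b k + 2))⁻¹ ((2 : ℝ) ^ (b k + 1))⁻¹) :
    ∑ j ∈ Finset.Icc 2 (Nat.log 2 n),
        (eps j n : ℝ) * (Dker (2 ^ (j + 1)) t - Dker (2 ^ j) t) * c j =
      ∑ j ∈ blockUnion a b k, 2 ^ j * c j := by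
  obtain ⟨hk1, hks⟩ := Finset.mem_Icc.mp hk
  have ht0 : 0 ≤ t := (inv_nonneg.mpr (by positivity)).trans ht.1.le
  have hdigit : xdigit (b k + 1) t = 1 := xdigit_eq_one (Ioo_subset_Ico_self ht)
  have hsub : blockUnion a b k ⊆ Finset.Icc 2 (Nat.log 2 n) := fun j hj =>
    have ⟨h2j, hj1⟩ := eps_eq_one_of_mem_blockUnion hab ha2 hba hdig hks hj
    Finset.mem_Icc.mpr ⟨h2j, le_log_of_eps_eq_one hj1⟩
  rw [← sum_subset hsub]
  · refine sum_congr rfl fun j hj => ?_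
    have hjk := le_of_mem_blockUnion hab hba hks hj
    have hle : ((2 : ℝ) ^ (b k + 1))⁻¹ ≤ ((2 : ℝ) ^ (j + 1))⁻¹ :=
      inv_anti₀ (by positivity) (pow_le_pow_right₀ one_le_two (by omega))
    rw [(eps_eq_one_of_mem_blockUnion hab ha2 hba hdig hks hj).2,
      Dker_two_pow_succ_sub_of_lt ⟨ht0, ht.2.trans_le hle⟩, Nat.cast_one, one_mul]
  · intro j hj hjk
    rcases Nat.mod_two_eq_zero_or_one (n / 2 ^ j) with h0 | h1
    · simp [eps, h0]
    · have := block_end_add_two_le hab hba hdig hk1 (Finset.mem_Icc.mp hj).1 h1 hjk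
      rw [Dker_two_pow_succ_sub_eq_zero (k := b k + 1) (by omega) hdigit, mul_zero, zero_mul]

end Blocks

theorem statement8_general (n s : ℕ) (a b : ℕ → ℕ)
    (hab : ∀ i ∈ Finset.Icc 1 s, a i ≤ b i)
    (ha2 : 2 ≤ a 1)
    (hba : ∀ i ∈ Finset.Icc 1 (s - 1), b i + 1 < a (i + 1))
    (hdig : ∀ j : ℕ, 2 ≤ j → (eps j n = 1 ↔ ∃ i ∈ Finset.Icc 1 s, a i ≤ j ∧ j ≤ b i))
    (k : ℕ) (hk : k ∈ Finset.Icc 1 s) (t : ℝ)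
    (ht : t ∈ Set.Ioo (((2 : ℝ) ^ (b k + 2))⁻¹) (((2 : ℝ) ^ (b k + 1))⁻¹)) :
    |walsh n t * ∑ j ∈ Finset.Icc 2 (Nat.log 2 n),
        (eps j n : ℝ) * (Dker (2 ^ (j + 1)) t - Dker (2 ^ j) t) * lsum (n % 2 ^ j)| =
      ∑ i ∈ Finset.Icc 1 k, ∑ j ∈ Finset.Icc (a i) (b i), (2 : ℝ) ^ j * lsum (n % 2 ^ j) ∧
    (2 : ℝ) ^ b k * lsum (n % 2 ^ b k) ≤
      ∑ i ∈ Finset.Icc 1 k, ∑ j ∈ Finset.Icc (a i) (b i), (2 : ℝ) ^ j * lsum (n % 2 ^ j) := by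
  rw [abs_mul, abs_walsh, one_mul,
    sum_eps_mul_Dker_sub_eq_sum_blockUnion hab ha2 hba hdig hk _ ht,
    ← sum_blockUnion hab hba (Finset.mem_Icc.mp hk).2]
  have hterm (j : ℕ) : 0 ≤ (2 : ℝ) ^ j * lsum (n % 2 ^ j) :=
    mul_nonneg (by positivity) (sum_nonneg fun _ _ => by positivity)
  have hbk : b k ∈ blockUnion a b k := mem_biUnion.mpr
    ⟨k, Finset.mem_Icc.mpr ⟨(Finset.mem_Icc.mp hk).1, le_rfl⟩, right_mem_Icc.mpr (hab k hk)⟩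
  exact ⟨abs_of_nonneg (sum_nonneg fun j _ => hterm j), single_le_sum (fun j _ => hterm j) hbk⟩

/-- on `B_k = (2^{-(b_k+2)}, 2^{-(b_k+1)})` one has
`|H_n^{(1)}(t)| = ∑_{i=1}^{k} ∑_{j=a_i}^{b_i} 2^j l_{n(j-1)} ≥ 2^{b_k} l_{n(b_k-1)}`,
where `H_n^{(1)}(t) = w_n(t) ∑_{j=2}^{|n|} ε_j(n)(D_{2^{j+1}}(t) - D_{2^j}(t)) l_{n(j-1)}`. -/
theorem statement8 (n s : ℕ) (hs : 1 ≤ s) (a b : ℕ → ℕ)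
    (hab : ∀ i ∈ Finset.Icc 1 s, a i ≤ b i)
    (ha2 : 2 ≤ a 1)
    (hba : ∀ i ∈ Finset.Icc 1 (s - 1), b i + 1 < a (i + 1))
    (hdig : ∀ j : ℕ, 2 ≤ j → (eps j n = 1 ↔ ∃ i ∈ Finset.Icc 1 s, a i ≤ j ∧ j ≤ b i))
    (k : ℕ) (hk : k ∈ Finset.Icc 1 s) (t : ℝ)
    (ht : t ∈ Set.Ioo (((2 : ℝ) ^ (b k + 2))⁻¹) (((2 : ℝ) ^ (b k + 1))⁻¹)) :
    |walsh n t * ∑ j ∈ Finset.Icc 2 (Nat.log 2 n),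
        (eps j n : ℝ) * (Dker (2 ^ (j + 1)) t - Dker (2 ^ j) t) * lsum (n % 2 ^ j)| =
      ∑ i ∈ Finset.Icc 1 k, ∑ j ∈ Finset.Icc (a i) (b i), (2 : ℝ) ^ j * lsum (n % 2 ^ j) ∧
    (2 : ℝ) ^ b k * lsum (n % 2 ^ b k) ≤
      ∑ i ∈ Finset.Icc 1 k, ∑ j ∈ Finset.Icc (a i) (b i), (2 : ℝ) ^ j * lsum (n % 2 ^ j) :=
  statement8_general n s a b hab ha2 hba hdig k hk t ht
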